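/- arXiv:2402.12191 — 9 statements merged into one kernel-verified Lean document; each statement's English description precedes it below -/
import Mathlib

section
/- For every bilevel feasible point (x,y) of the problem (P) with coupling constraints, the point (x,y,0) is bilevel feasible for the problem (P') with a single coupling constraint, and the upper-level objective values agree: cᵀx + dᵀy = cᵀx + dᵀy. Formally: if (x,y) ∈ F, then (x,y,0) ∈ F'. -/
open Matrix

/-- Lower-level optimal set `S(x)`. -/
def llOpt {n p q : ℕ} (C : Matrix (Fin q) (Fin n) ℝ) (D : Matrix (Fin q) (Fin p) ℝ)
    (b : Fin q → ℝ) (f : Fin p → ℝ) (x : Fin n → ℝ) : Set (Fin p → ℝ) :=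
  {y | b ≤ C.mulVec x + D.mulVec y ∧
       ∀ y' : Fin p → ℝ, b ≤ C.mulVec x + D.mulVec y' → f ⬝ᵥ y ≤ f ⬝ᵥ y'}

/-- Extended lower-level optimal set `S̃(x)`. -/
def llOptExt {m n p q : ℕ} (A : Matrix (Fin m) (Fin n) ℝ) (B : Matrix (Fin m) (Fin p) ℝ)
    (C : Matrix (Fin q) (Fin n) ℝ) (D : Matrix (Fin q) (Fin p) ℝ)
    (a : Fin m → ℝ) (b : Fin q → ℝ) (f : Fin p → ℝ) (x : Fin n → ℝ) :
    Set ((Fin p → ℝ) × ℝ) :=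
  {ye | a ≤ A.mulVec x + B.mulVec ye.1 + (fun _ => ye.2) ∧
        b ≤ C.mulVec x + D.mulVec ye.1 ∧ 0 ≤ ye.2 ∧
        ∀ (y' : Fin p → ℝ) (ε' : ℝ),
          a ≤ A.mulVec x + B.mulVec y' + (fun _ => ε') →
          b ≤ C.mulVec x + D.mulVec y' → 0 ≤ ε' →
          f ⬝ᵥ ye.1 ≤ f ⬝ᵥ y'}

/-- Feasible set `F` of the bilevel problem (P) with coupling constraints. -/
def bilevelFeas {m n p q : ℕ} (A : Matrix (Fin m) (Fin n) ℝ) (B : Matrix (Fin m) (Fin p) ℝ)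
    (C : Matrix (Fin q) (Fin n) ℝ) (D : Matrix (Fin q) (Fin p) ℝ)
    (a : Fin m → ℝ) (b : Fin q → ℝ) (f : Fin p → ℝ) (X : Set (Fin n → ℝ)) :
    Set ((Fin n → ℝ) × (Fin p → ℝ)) :=
  {w | w.1 ∈ X ∧ a ≤ A.mulVec w.1 + B.mulVec w.2 ∧ w.2 ∈ llOpt C D b f w.1}

/-- Feasible set `F'` of the bilevel problem (P') with a single coupling constraint. -/
def bilevelFeas' {m n p q : ℕ} (A : Matrix (Fin m) (Fin n) ℝ) (B : Matrix (Fin m) (Fin p) ℝ)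
    (C : Matrix (Fin q) (Fin n) ℝ) (D : Matrix (Fin q) (Fin p) ℝ)
    (a : Fin m → ℝ) (b : Fin q → ℝ) (f : Fin p → ℝ) (X : Set (Fin n → ℝ)) :
    Set ((Fin n → ℝ) × (Fin p → ℝ) × ℝ) :=
  {w | w.1 ∈ X ∧ w.2.2 = 0 ∧ (w.2.1, w.2.2) ∈ llOptExt A B C D a b f w.1}

/-- every bilevel feasible point `(x,y)` of (P) yields a bilevel feasible
point `(x,y,0)` of (P') with the same upper-level objective value. -/
theorem feasible_P_to_P' {m n p q : ℕ}
    (A : Matrix (Fin m) (Fin n) ℝ) (B : Matrix (Fin m) (Fin p) ℝ)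
    (C : Matrix (Fin q) (Fin n) ℝ) (D : Matrix (Fin q) (Fin p) ℝ)
    (a : Fin m → ℝ) (b : Fin q → ℝ) (c : Fin n → ℝ) (d f : Fin p → ℝ)
    (X : Set (Fin n → ℝ)) (x : Fin n → ℝ) (y : Fin p → ℝ)
    (hxy : (x, y) ∈ bilevelFeas A B C D a b f X) :
    (x, y, (0 : ℝ)) ∈ bilevelFeas' A B C D a b f X ∧
      c ⬝ᵥ x + d ⬝ᵥ y = c ⬝ᵥ x + d ⬝ᵥ y := by
  obtain ⟨hX, hcoup, hfeas, hopt⟩ := hxy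
  refine ⟨⟨hX, rfl, ?_, hfeas, le_refl 0, ?_⟩, rfl⟩
  · have h0 : (fun _ : Fin m => (0:ℝ)) = 0 := rfl
    rw [h0, add_zero]; exact hcoup
  · intro y' ε' _ hb _
    exact hopt y' hb
end

section
/- For every bilevel feasible point (x,y,ε) of the problem (P') with a single coupling constraint, the point (x,y) is bilevel feasible for the problem (P) with coupling constraints, and the upper-level objective values agree. Formally: if (x,y,ε) ∈ F', then (x,y) ∈ F. -/
open Matrix

/-- every bilevel feasible point `(x,y,ε)` of (P') yields a bilevel feasible
point `(x,y)` of (P) with the same upper-level objective value. -/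
theorem feasible_P'_to_P {m n p q : ℕ}
    (A : Matrix (Fin m) (Fin n) ℝ) (B : Matrix (Fin m) (Fin p) ℝ)
    (C : Matrix (Fin q) (Fin n) ℝ) (D : Matrix (Fin q) (Fin p) ℝ)
    (a : Fin m → ℝ) (b : Fin q → ℝ) (c : Fin n → ℝ) (d f : Fin p → ℝ)
    (X : Set (Fin n → ℝ)) (x : Fin n → ℝ) (y : Fin p → ℝ) (ε : ℝ)
    (hxyε : (x, y, ε) ∈ bilevelFeas' A B C D a b f X) :
    (x, y) ∈ bilevelFeas A B C D a b f X ∧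
      c ⬝ᵥ x + d ⬝ᵥ y = c ⬝ᵥ x + d ⬝ᵥ y := by
  obtain ⟨hX, hε0, hA, hC, hεnn, hopt⟩ := hxyε
  subst hε0
  have hA' : a ≤ A.mulVec x + B.mulVec y := by
    intro i; have := hA i; simpa using this
  refine ⟨⟨hX, hA', hC, ?_⟩, rfl⟩
  intro y' hy'
  set v := A.mulVec x + B.mulVec y' with hv
  set ε' := ∑ i : Fin m, max 0 (a i - v i) with hε'
  have hε'nn : 0 ≤ ε' := Finset.sum_nonneg fun i _ => le_max_left _ _
  refine hopt y' ε' ?_ hy' hε'nn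
  intro i
  have h1 : a i - v i ≤ ε' := by
    calc a i - v i ≤ max 0 (a i - v i) := le_max_right _ _
    _ ≤ ε' := Finset.single_le_sum (f := fun i => max 0 (a i - v i))
        (fun j _ => le_max_left _ _) (Finset.mem_univ i)
  have hvi : v i = (A.mulVec x) i + (B.mulVec y') i := rfl
  show a i ≤ ((A.mulVec x + B.mulVec y') i) + ε'
  simp only [Pi.add_apply]
  linarith
end

section
/- The feasible set of the problem (P') with a single coupling constraint is exactly the feasible set of the problem (P) with coupling constraints with a zero appended: F' = {(x,y,0) | (x,y) ∈ F}. -/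
open Matrix

/-- `F' = {(x,y,0) | (x,y) ∈ F}`. -/
theorem feasibleSet_P'_eq {m n p q : ℕ}
    (A : Matrix (Fin m) (Fin n) ℝ) (B : Matrix (Fin m) (Fin p) ℝ)
    (C : Matrix (Fin q) (Fin n) ℝ) (D : Matrix (Fin q) (Fin p) ℝ)
    (a : Fin m → ℝ) (b : Fin q → ℝ) (f : Fin p → ℝ) (X : Set (Fin n → ℝ)) :
    bilevelFeas' A B C D a b f X =
      {w : (Fin n → ℝ) × (Fin p → ℝ) × ℝ |
        (w.1, w.2.1) ∈ bilevelFeas A B C D a b f X ∧ w.2.2 = 0} := by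
  ext ⟨x, y, ε⟩
  simp only [bilevelFeas', bilevelFeas, llOpt, llOptExt, Set.mem_setOf_eq]
  constructor
  · rintro ⟨hX, hε, h1, h2, _, hopt⟩
    subst hε
    refine ⟨⟨hX, ?_, h2, fun y' hy' => ?_⟩, rfl⟩
    · intro i; have := h1 i; simpa using this
    · set v := A.mulVec x + B.mulVec y' with hv
      refine hopt y' (∑ i, |a i - v i|) (fun i => ?_) hy'
        (Finset.sum_nonneg fun i _ => abs_nonneg _)
      have h3 : a i - v i ≤ ∑ j, |a j - v j| :=
        le_trans (le_abs_self _) (Finset.single_le_sum (f := fun j => |a j - v j|) (fun j _ => abs_nonneg _) (Finset.mem_univ i))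
      have hvi : v i = (A.mulVec x) i + (B.mulVec y') i := rfl
      simp only [Pi.add_apply]
      linarith
  · rintro ⟨⟨hX, h1, h2, hopt⟩, hε⟩
    subst hε
    refine ⟨hX, rfl, fun i => ?_, h2, le_refl 0, fun y' ε' _ hy' _ => hopt y' hy'⟩
    have := h1 i; simp only [Pi.add_apply] at this ⊢; linarith
end

section
/- The problems (P) and (P') have the same optimal value: the infimum of cᵀx + dᵀy over (x,y) ∈ F equals the infimum of cᵀx + dᵀy over (x,y,ε) ∈ F'. -/
open Matrix

/-- (P) and (P') have the same optimal value. -/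
theorem optimalValue_P_eq_P' {m n p q : ℕ}
    (A : Matrix (Fin m) (Fin n) ℝ) (B : Matrix (Fin m) (Fin p) ℝ)
    (C : Matrix (Fin q) (Fin n) ℝ) (D : Matrix (Fin q) (Fin p) ℝ)
    (a : Fin m → ℝ) (b : Fin q → ℝ) (c : Fin n → ℝ) (d f : Fin p → ℝ)
    (X : Set (Fin n → ℝ)) :
    sInf ((fun w : (Fin n → ℝ) × (Fin p → ℝ) => c ⬝ᵥ w.1 + d ⬝ᵥ w.2) ''
        bilevelFeas A B C D a b f X) =
      sInf ((fun w : (Fin n → ℝ) × (Fin p → ℝ) × ℝ => c ⬝ᵥ w.1 + d ⬝ᵥ w.2.1) ''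
        bilevelFeas' A B C D a b f X) := by
  congr 1
  ext v
  constructor
  · rintro ⟨⟨x, y⟩, ⟨hX, hcouple, hb, hopt⟩, rfl⟩
    refine ⟨(x, y, 0), ⟨hX, rfl, ?_, hb, le_refl 0, ?_⟩, rfl⟩
    · intro i
      simpa using hcouple i
    · intro y' ε' _ h2 _
      exact hopt y' h2
  · rintro ⟨⟨x, y, ε⟩, ⟨hX, hε, h1, h2, _, hopt⟩, rfl⟩
    subst hε
    refine ⟨(x, y), ⟨hX, ?_, h2, ?_⟩, rfl⟩
    · intro i
      simpa using h1 i
    · intro y' hy'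
      set ε' := ∑ i : Fin m, max 0 (a i - (A.mulVec x + B.mulVec y') i) with hε'
      have hε'nn : 0 ≤ ε' := Finset.sum_nonneg fun j _ => le_max_left _ _
      refine hopt y' ε' ?_ hy' hε'nn
      intro i
      have h1 : a i - (A.mulVec x + B.mulVec y') i ≤ ε' := by
        calc a i - (A.mulVec x + B.mulVec y') i
            ≤ max 0 (a i - (A.mulVec x + B.mulVec y') i) := le_max_right _ _
          _ ≤ ε' := Finset.single_le_sum
              (f := fun j => max 0 (a j - (A.mulVec x + B.mulVec y') j))
              (fun j _ => le_max_left _ _) (Finset.mem_univ i)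
      simp only [Pi.add_apply] at h1 ⊢
      linarith
end

section
/- A point (x,y) is an optimal solution of (P) if and only if (x,y,0) is an optimal solution of (P'); that is, (x,y) minimizes cᵀx + dᵀy over F if and only if (x,y,0) minimizes cᵀx + dᵀy over F'. -/
open Matrix

lemma aux_feas_iff {m n p q : ℕ}
    (A : Matrix (Fin m) (Fin n) ℝ) (B : Matrix (Fin m) (Fin p) ℝ)
    (C : Matrix (Fin q) (Fin n) ℝ) (D : Matrix (Fin q) (Fin p) ℝ)
    (a : Fin m → ℝ) (b : Fin q → ℝ) (f : Fin p → ℝ)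
    (X : Set (Fin n → ℝ)) (x : Fin n → ℝ) (y : Fin p → ℝ) :
    (x, y) ∈ bilevelFeas A B C D a b f X ↔
      (x, y, (0 : ℝ)) ∈ bilevelFeas' A B C D a b f X := by
  have hz : (fun _ : Fin m => (0:ℝ)) = (0 : Fin m → ℝ) := rfl
  constructor
  · rintro ⟨hX, hA, hb, hopt⟩
    refine ⟨hX, rfl, ?_, hb, le_refl 0, ?_⟩
    · simpa [hz] using hA
    · intro y' ε' _ hb' _
      exact hopt y' hb'
  · rintro ⟨hX, _, hA, hb, _, hopt⟩
    refine ⟨hX, ?_, hb, ?_⟩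
    · simpa [hz] using hA
    · intro y' hb'
      set v := A.mulVec x + B.mulVec y' with hv
      set ε' := ∑ i, max 0 (a i - v i) with hε
      have hε0 : 0 ≤ ε' := Finset.sum_nonneg (fun i _ => le_max_left _ _)
      have hA' : a ≤ v + (fun _ => ε') := by
        intro i
        have h2 := Finset.single_le_sum (f := fun j => max 0 (a j - v j))
          (fun j _ => le_max_left _ _) (Finset.mem_univ i)
        have h1 : a i - v i ≤ ε' := le_trans (le_max_right 0 _) h2
        simp only [Pi.add_apply]
        linarith
      exact hopt y' ε' hA' hb' hε0

/-- `(x,y)` is optimal for (P) iff `(x,y,0)` is optimal for (P'). -/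
theorem optimal_P_iff_optimal_P' {m n p q : ℕ}
    (A : Matrix (Fin m) (Fin n) ℝ) (B : Matrix (Fin m) (Fin p) ℝ)
    (C : Matrix (Fin q) (Fin n) ℝ) (D : Matrix (Fin q) (Fin p) ℝ)
    (a : Fin m → ℝ) (b : Fin q → ℝ) (c : Fin n → ℝ) (d f : Fin p → ℝ)
    (X : Set (Fin n → ℝ)) (x : Fin n → ℝ) (y : Fin p → ℝ) :
    ((x, y) ∈ bilevelFeas A B C D a b f X ∧
        ∀ w ∈ bilevelFeas A B C D a b f X, c ⬝ᵥ x + d ⬝ᵥ y ≤ c ⬝ᵥ w.1 + d ⬝ᵥ w.2) ↔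
      ((x, y, (0 : ℝ)) ∈ bilevelFeas' A B C D a b f X ∧
        ∀ w ∈ bilevelFeas' A B C D a b f X, c ⬝ᵥ x + d ⬝ᵥ y ≤ c ⬝ᵥ w.1 + d ⬝ᵥ w.2.1) := by
  constructor
  · rintro ⟨hfeas, hmin⟩
    refine ⟨(aux_feas_iff A B C D a b f X x y).mp hfeas, ?_⟩
    intro w hw
    have h0 : w.2.2 = 0 := hw.2.1
    have hw' : (w.1, w.2.1, (0:ℝ)) ∈ bilevelFeas' A B C D a b f X := by
      have he : w = (w.1, w.2.1, w.2.2) := rfl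
      rw [he, h0] at hw
      exact hw
    exact hmin (w.1, w.2.1) ((aux_feas_iff A B C D a b f X w.1 w.2.1).mpr hw')
  · rintro ⟨hfeas, hmin⟩
    refine ⟨(aux_feas_iff A B C D a b f X x y).mpr hfeas, ?_⟩
    intro w hw
    exact hmin (w.1, w.2, 0) ((aux_feas_iff A B C D a b f X w.1 w.2).mp hw)
end

section
/- For every x ∈ ℝ^n, the lower-level optimal set equals the projection of the extended lower-level optimal set onto the y-variables: S(x) = {y ∈ ℝ^p | there exists ε ∈ ℝ with (y,ε) ∈ S̃(x)}. -/
open Matrix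

/-- `S(x)` is the projection of `S̃(x)` onto the `y`-variables. -/
theorem llOpt_eq_proj_llOptExt {m n p q : ℕ}
    (A : Matrix (Fin m) (Fin n) ℝ) (B : Matrix (Fin m) (Fin p) ℝ)
    (C : Matrix (Fin q) (Fin n) ℝ) (D : Matrix (Fin q) (Fin p) ℝ)
    (a : Fin m → ℝ) (b : Fin q → ℝ) (f : Fin p → ℝ) (x : Fin n → ℝ) :
    llOpt C D b f x =
      {y : Fin p → ℝ | ∃ ε : ℝ, (y, ε) ∈ llOptExt A B C D a b f x} := by
  have key : ∀ y' : Fin p → ℝ, ∃ ε : ℝ, 0 ≤ ε ∧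
      a ≤ A.mulVec x + B.mulVec y' + (fun _ => ε) := by
    intro y'
    obtain ⟨M, hM⟩ := Finite.exists_le (fun i => a i - (A.mulVec x + B.mulVec y') i)
    refine ⟨max M 0, le_max_right _ _, fun i => ?_⟩
    have := hM i
    simp only [Pi.add_apply]
    have : a i - (A.mulVec x + B.mulVec y') i ≤ max M 0 :=
      le_trans this (le_max_left _ _)
    simp only [Pi.add_apply] at this
    linarith
  ext y
  constructor
  · rintro ⟨hfeas, hopt⟩
    obtain ⟨ε, hε0, hεA⟩ := key y
    refine ⟨ε, hεA, hfeas, hε0, ?_⟩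
    intro y' ε' _ hC _
    exact hopt y' hC
  · rintro ⟨ε, _, hC, _, hopt⟩
    refine ⟨hC, fun y' hC' => ?_⟩
    obtain ⟨ε', hε'0, hε'A⟩ := key y'
    exact hopt y' ε' hε'A hC' hε'0
end

section
/- If (x,y) is bilevel feasible for the problem (P) with coupling constraints, i.e., x ∈ X, Ax + By ≥ a, and y ∈ S(x), then (y,0) belongs to the extended lower-level optimal set: (y,0) ∈ S̃(x). -/
open Matrix

/-- if `(x,y)` is bilevel feasible for (P), then `(y,0) ∈ S̃(x)`. -/
theorem mem_llOptExt_of_bilevelFeas {m n p q : ℕ}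
    (A : Matrix (Fin m) (Fin n) ℝ) (B : Matrix (Fin m) (Fin p) ℝ)
    (C : Matrix (Fin q) (Fin n) ℝ) (D : Matrix (Fin q) (Fin p) ℝ)
    (a : Fin m → ℝ) (b : Fin q → ℝ) (f : Fin p → ℝ) (X : Set (Fin n → ℝ))
    (x : Fin n → ℝ) (y : Fin p → ℝ)
    (hX : x ∈ X) (hcc : a ≤ A.mulVec x + B.mulVec y) (hy : y ∈ llOpt C D b f x) :
    (y, (0 : ℝ)) ∈ llOptExt A B C D a b f x := by
  obtain ⟨h1, h2⟩ := hy
  refine ⟨?_, h1, le_refl 0, fun y' ε' _ hb _ => h2 y' hb⟩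
  intro i; simpa using hcc i
end

section
/- If (x,y,ε) is bilevel feasible for the problem (P') with a single coupling constraint, i.e., x ∈ X, ε = 0, and (y,ε) ∈ S̃(x), then y belongs to the lower-level optimal set of the original problem: y ∈ S(x). -/
open Matrix

/-- if `(x,y,ε)` is bilevel feasible for (P'), then `y ∈ S(x)`. -/
theorem mem_llOpt_of_bilevelFeas' {m n p q : ℕ}
    (A : Matrix (Fin m) (Fin n) ℝ) (B : Matrix (Fin m) (Fin p) ℝ)
    (C : Matrix (Fin q) (Fin n) ℝ) (D : Matrix (Fin q) (Fin p) ℝ)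
    (a : Fin m → ℝ) (b : Fin q → ℝ) (f : Fin p → ℝ) (X : Set (Fin n → ℝ))
    (x : Fin n → ℝ) (y : Fin p → ℝ) (ε : ℝ)
    (hX : x ∈ X) (hε : ε = 0) (hy : (y, ε) ∈ llOptExt A B C D a b f x) :
    y ∈ llOpt C D b f x := by
  obtain ⟨_, hD, _, hopt⟩ := hy
  refine ⟨hD, fun y' hy' => ?_⟩
  set g : Fin m → ℝ := fun i => a i - (A.mulVec x + B.mulVec y') i with hg
  set ε' : ℝ := ∑ i, max 0 (g i) with hε'
  have hε'nn : 0 ≤ ε' := Finset.sum_nonneg fun i _ => le_max_left _ _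
  have hA' : a ≤ A.mulVec x + B.mulVec y' + (fun _ => ε') := by
    intro i
    have h1 : g i ≤ ε' := by
      calc g i ≤ max 0 (g i) := le_max_right _ _
        _ ≤ ε' := Finset.single_le_sum (f := fun i => max 0 (g i))
              (fun j _ => le_max_left _ _) (Finset.mem_univ i)
    simp only [hg, sub_le_iff_le_add] at h1; simpa [Pi.add_apply, add_comm] using h1
  exact hopt y' ε' hA' hy' hε'nn
end

section
/- The bilevel feasible set of the example problem with a coupling constraint, namely the set F₀ := {(x,y) ∈ ℝ² | −x + 5y ≤ 12.5 and y ∈ S₀(x)}, where S₀(x) is the set of maximizers of y over the polytope {y ∈ ℝ | 2x − y ≥ 0, −x − y ≥ −6, −x + 6y ≥ −3, x + 3y ≥ 3}, is a nonempty subset of ℝ² that is not connected. -/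
/-- Lower-level optimal set of the example problem: maximizers of `y` over the
polytope given by the four linear constraints. -/
def S0 (x : ℝ) : Set ℝ :=
  {y | 2 * x - y ≥ 0 ∧ -x - y ≥ -6 ∧ -x + 6 * y ≥ -3 ∧ x + 3 * y ≥ 3 ∧
       ∀ y' : ℝ, 2 * x - y' ≥ 0 → -x - y' ≥ -6 → -x + 6 * y' ≥ -3 →
         x + 3 * y' ≥ 3 → y' ≤ y}

/-- Bilevel feasible set of the example problem with the coupling constraint
`−x + 5y ≤ 12.5`. -/
def F0 : Set (ℝ × ℝ) :=
  {w | -w.1 + 5 * w.2 ≤ 12.5 ∧ w.2 ∈ S0 w.1}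

lemma mem12 : ((1 : ℝ), (2 : ℝ)) ∈ F0 := by
  refine ⟨by norm_num, by norm_num, by norm_num, by norm_num, by norm_num, ?_⟩
  intro y' h1 _ _ _
  simp only at h1 ⊢
  linarith

lemma mem33 : ((3 : ℝ), (3 : ℝ)) ∈ F0 := by
  refine ⟨by norm_num, by norm_num, by norm_num, by norm_num, by norm_num, ?_⟩
  intro y' _ h2 _ _
  simp only at h2 ⊢
  linarith

lemma no_two : ∀ w ∈ F0, w.1 ≠ 2 := by
  rintro ⟨x, y⟩ ⟨hc, h1, h2, h3, h4, hopt⟩ hx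
  simp only at hx
  subst hx
  have h4' : (4 : ℝ) ≤ y := hopt 4 (by norm_num) (by norm_num) (by norm_num) (by norm_num)
  simp only at hc
  linarith

/-- the bilevel feasible set of the example problem is nonempty
but not connected. -/
theorem example_feasibleSet_nonempty_not_connected :
    F0.Nonempty ∧ ¬ IsConnected F0 := by
  constructor
  · exact ⟨_, mem12⟩
  · rintro ⟨-, hpc⟩
    have hu : IsOpen {w : ℝ × ℝ | w.1 < 2} := isOpen_lt continuous_fst continuous_const
    have hv : IsOpen {w : ℝ × ℝ | 2 < w.1} := isOpen_lt continuous_const continuous_fst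
    have hsub : F0 ⊆ {w : ℝ × ℝ | w.1 < 2} ∪ {w : ℝ × ℝ | 2 < w.1} := by
      intro w hw
      rcases lt_trichotomy w.1 2 with h | h | h
      · exact Or.inl h
      · exact absurd h (no_two w hw)
      · exact Or.inr h
    have hne1 : (F0 ∩ {w : ℝ × ℝ | w.1 < 2}).Nonempty :=
      ⟨(1, 2), mem12, show ((1:ℝ),(2:ℝ)).1 < 2 by norm_num⟩
    have hne2 : (F0 ∩ {w : ℝ × ℝ | 2 < w.1}).Nonempty :=
      ⟨(3, 3), mem33, show (2:ℝ) < ((3:ℝ),(3:ℝ)).1 by norm_num⟩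
    obtain ⟨w, -, h1, h2⟩ := hpc {w : ℝ × ℝ | w.1 < 2} {w : ℝ × ℝ | 2 < w.1} hu hv hsub hne1 hne2
    simp only [Set.mem_setOf_eq] at h1 h2
    linarith
end
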